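/- arXiv:0909.5473 — 2 statements merged into one kernel-verified Lean document; each statement's English description precedes it below -/
import Mathlib

section
/- For every a > 0, the inequality (1 − e^{−a})/a + (1/4)·(e^{−a} − e^{−2a})/a + (9/4)·(e^{−2a} − e^{−4a})/a ≤ 1/a holds. -/
/-!
With `x = exp (-a)` and the denominator `a` cleared, the inequality reads
`x (9 x³ - 8 x + 3) / 4 ≥ 0`. The cubic is positive on `[0, ∞)`: its minimum there, at
`x² = 8/27`, is `3 - (16/3) √(8/27) > 0`.
-/

open Real

/-- For `c = 109/200`, `9 x³ - 8 x + 3 = 9 x (x - c)² + 18 c (x - c)² + (27 c² - 8) x + (3 - 18 c³)`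
with both trailing coefficients positive. -/
lemma cubic_nonneg {x : ℝ} (hx : 0 ≤ x) : 0 ≤ 9 * x ^ 3 - 8 * x + 3 := by
  nlinarith [sq_nonneg (x - 109 / 200), mul_nonneg hx (sq_nonneg (x - 109 / 200))]

lemma vase_polynomial_le_one {x : ℝ} (hx : 0 ≤ x) :
    (1 - x) + 1 / 4 * (x - x ^ 2) + 9 / 4 * (x ^ 2 - x ^ 4) ≤ 1 := by
  have h := mul_nonneg hx (cubic_nonneg hx)
  linarith

lemma exp_neg_mul_eq_pow (n : ℕ) (a : ℝ) : exp (-n * a) = exp (-a) ^ n := by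
  rw [← exp_nat_mul]
  ring_nf

theorem stmt2 (a : ℝ) (ha : 0 < a) :
    (1 - Real.exp (-a)) / a + (1 / 4) * (Real.exp (-a) - Real.exp (-2 * a)) / a +
      (9 / 4) * (Real.exp (-2 * a) - Real.exp (-4 * a)) / a ≤ 1 / a := by
  rw [← add_div, ← add_div]
  gcongr
  have h2 := exp_neg_mul_eq_pow 2 a
  have h4 := exp_neg_mul_eq_pow 4 a
  push_cast at h2 h4
  rw [h2, h4]
  exact vase_polynomial_le_one (exp_pos _).le
end

section
/- Let μ > 0 and consider the cylinder with radii r_1, r_2, r_3 and heights h_1, h_2, h_3 satisfying 0 < r_2 < r_1 < r_3, r_2^{d−1} + r_3^{d−1} ≤ 2·r_1^{d−1}, 0 ≥ h_1 > h_2 > h_3 and h_1 − h_2 ≥ h_2 − h_3. Then for every a > 0: r_1^{d−1}·∫_{h_1}^{0} e^{ay} dy + r_2^{d−1}·∫_{h_2}^{h_1} e^{ay} dy + r_3^{d−1}·∫_{h_3}^{h_2} e^{ay} dy ≤ r_1^{d−1}/a. -/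
/-!
Writing `xᵢ = exp (a hᵢ)`, each integral equals `(x_top - x_bottom) / a`. By convexity of `exp`
and the gap condition, the increment `x₂ - x₃` is at most `x₁ - x₂`; an Abel summation then
bounds the weighted increments `r₂^(d-1) (x₁ - x₂) + r₃^(d-1) (x₂ - x₃)` by
`r₁^(d-1) (x₁ - x₃)`, and the total is at most `r₁^(d-1) (1 - x₃) / a ≤ r₁^(d-1) / a`.
-/

open Real

theorem intervalIntegral.integral_exp_mul {a : ℝ} (ha : a ≠ 0) (l u : ℝ) :
    ∫ y in l..u, exp (a * y) = (exp (a * u) - exp (a * l)) / a := by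
  rw [intervalIntegral.integral_comp_mul_left (fun x => exp x) ha, integral_exp, smul_eq_mul,
    inv_mul_eq_div]

theorem ConvexOn.sub_le_sub_of_sub_le_sub {𝕜 : Type*} [Field 𝕜] [LinearOrder 𝕜]
    [IsStrictOrderedRing 𝕜] {s : Set 𝕜} {f : 𝕜 → 𝕜} (hf : ConvexOn 𝕜 s f) {x y z : 𝕜}
    (hx : x ∈ s) (hz : z ∈ s) (hxy : x < y) (hyz : y < z) (hgap : y - x ≤ z - y)
    (hfyz : f y ≤ f z) : f y - f x ≤ f z - f y := by
  have hslope := hf.slope_mono_adjacent hx hz hxy hyz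
  have hslope_nonneg : 0 ≤ (f z - f y) / (z - y) := div_nonneg (sub_nonneg.2 hfyz) (by linarith)
  calc f y - f x = (f y - f x) / (y - x) * (y - x) := by field_simp [(sub_pos.2 hxy).ne']
    _ ≤ (f z - f y) / (z - y) * (y - x) := by gcongr
    _ ≤ (f z - f y) / (z - y) * (z - y) := by gcongr
    _ = f z - f y := by field_simp [(sub_pos.2 hyz).ne']

/-- Abel summation: `R₂ D₁ + R₃ D₂ = R₂ (D₁ - D₂) + (R₂ + R₃) D₂`. -/
theorem mul_add_mul_le_mul_add {R₁ R₂ R₃ D₁ D₂ : ℝ} (hR₂₁ : R₂ ≤ R₁) (hR : R₂ + R₃ ≤ 2 * R₁)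
    (hD₂ : 0 ≤ D₂) (hD₂₁ : D₂ ≤ D₁) : R₂ * D₁ + R₃ * D₂ ≤ R₁ * (D₁ + D₂) := by
  nlinarith [mul_le_mul_of_nonneg_right hR₂₁ (sub_nonneg.2 hD₂₁),
    mul_le_mul_of_nonneg_right hR hD₂]

theorem stmt14_general (d : ℕ)
    (r₁ r₂ r₃ h₁ h₂ h₃ : ℝ)
    (hr : 0 < r₂ ∧ r₂ < r₁ ∧ r₁ < r₃)
    (hrsum : r₂ ^ (d - 1) + r₃ ^ (d - 1) ≤ 2 * r₁ ^ (d - 1))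
    (hh : h₁ ≤ 0 ∧ h₂ < h₁ ∧ h₃ < h₂)
    (hgap : h₁ - h₂ ≥ h₂ - h₃) :
    ∀ a : ℝ, 0 < a →
      r₁ ^ (d - 1) * (∫ y in h₁..0, Real.exp (a * y)) +
        r₂ ^ (d - 1) * (∫ y in h₂..h₁, Real.exp (a * y)) +
        r₃ ^ (d - 1) * (∫ y in h₃..h₂, Real.exp (a * y)) ≤ r₁ ^ (d - 1) / a := by
  obtain ⟨hr₂, hr₂₁, -⟩ := hr
  obtain ⟨-, hh₂₁, hh₃₂⟩ := hh
  intro a ha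
  simp only [intervalIntegral.integral_exp_mul ha.ne', mul_zero, exp_zero]
  have hincr : exp (a * h₂) - exp (a * h₃) ≤ exp (a * h₁) - exp (a * h₂) :=
    convexOn_exp.sub_le_sub_of_sub_le_sub trivial trivial (by gcongr) (by gcongr)
      (by nlinarith) (by gcongr)
  have hweighted := mul_add_mul_le_mul_add (pow_le_pow_left₀ hr₂.le hr₂₁.le (d - 1)) hrsum
    (sub_nonneg.2 (exp_le_exp.2 (by gcongr))) hincr
  have hR₁ : 0 ≤ r₁ ^ (d - 1) := by positivity [hr₂.trans hr₂₁]
  calc _ = (r₁ ^ (d - 1) * (1 - exp (a * h₁)) + (r₂ ^ (d - 1) * (exp (a * h₁) - exp (a * h₂))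
          + r₃ ^ (d - 1) * (exp (a * h₂) - exp (a * h₃)))) / a := by ring
    _ ≤ (r₁ ^ (d - 1) * (1 - exp (a * h₁)) + r₁ ^ (d - 1) * ((exp (a * h₁) - exp (a * h₂))
          + (exp (a * h₂) - exp (a * h₃)))) / a := by gcongr
    _ = (r₁ ^ (d - 1) - r₁ ^ (d - 1) * exp (a * h₃)) / a := by ring
    _ ≤ r₁ ^ (d - 1) / a := by gcongr; exact sub_le_self _ (by positivity)

theorem stmt14 (d : ℕ) (hd : 2 ≤ d) (μ : ℝ) (hμ : 0 < μ)
    (r₁ r₂ r₃ h₁ h₂ h₃ : ℝ)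
    (hr : 0 < r₂ ∧ r₂ < r₁ ∧ r₁ < r₃)
    (hrsum : r₂ ^ (d - 1) + r₃ ^ (d - 1) ≤ 2 * r₁ ^ (d - 1))
    (hh : h₁ ≤ 0 ∧ h₂ < h₁ ∧ h₃ < h₂)
    (hgap : h₁ - h₂ ≥ h₂ - h₃) :
    ∀ a : ℝ, 0 < a →
      r₁ ^ (d - 1) * (∫ y in h₁..0, Real.exp (a * y)) +
        r₂ ^ (d - 1) * (∫ y in h₂..h₁, Real.exp (a * y)) +
        r₃ ^ (d - 1) * (∫ y in h₃..h₂, Real.exp (a * y)) ≤ r₁ ^ (d - 1) / a :=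
  stmt14_general d r₁ r₂ r₃ h₁ h₂ h₃ hr hrsum hh hgap
end
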